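/- arXiv:2205.04700 — 3 statements merged into one kernel-verified Lean document; each statement's English description precedes it below -/
import Mathlib

section
/- Let C ∈ GL_n(ℂ) be regular, i.e. the centralizer {X ∈ Mat_n(ℂ) : XC = CX} has ℂ-dimension n. Then the family of functions σ_i(C)^{(r)} : Mat_n(ℂ((z^{−1}))) → ℂ, indexed by the pairs (i,r) with i ∈ {1,…,n} and r ∈ ℤ, is algebraically independent over ℂ in the ℂ-algebra of all ℂ-valued functions on Mat_n(ℂ((z^{−1}))) with pointwise operations. -/
noncomputable section

open Finset

/-- The coefficient of `z^{-r}` in the sum of the principal `i × i` minors of `C · g`,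
where `g` is a matrix of formal Laurent series in `z^{-1}` (with `t = z^{-1}`, the
coefficient of `z^{-r}` is the coefficient at `t^r`). -/
def sigmaFn (n : ℕ) (C : Matrix (Fin n) (Fin n) ℂ) (i : ℕ) (r : ℤ)
    (g : Matrix (Fin n) (Fin n) (LaurentSeries ℂ)) : ℂ :=
  (∑ S ∈ Finset.univ.powerset.filter (fun S : Finset (Fin n) => S.card = i),
      ((C.map (algebraMap ℂ (LaurentSeries ℂ)) * g).submatrix
          (fun a : {x // x ∈ S} => a.1) (fun a : {x // x ∈ S} => a.1)).det).coeff r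

/-- The auxiliary "companion-like" matrix: first column `b`, superdiagonal ones. -/
def Mmat (n : ℕ) (b : Fin n → LaurentSeries ℂ) : Matrix (Fin n) (Fin n) (LaurentSeries ℂ) :=
  fun j k => if (k : ℕ) = 0 then b j else if (k : ℕ) = (j : ℕ) + 1 then 1 else 0

lemma card_filter_lt (n i : ℕ) (h : i ≤ n) :
    (Finset.univ.filter (fun j : Fin n => (j : ℕ) < i)).card = i := by
  rw [← Finset.card_image_of_injective _ Fin.val_injective]
  have : (Finset.univ.filter (fun j : Fin n => (j : ℕ) < i)).image Fin.val
      = Finset.range i := by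
    ext a
    simp only [Finset.mem_image, Finset.mem_filter, Finset.mem_univ, true_and,
      Finset.mem_range]
    constructor
    · rintro ⟨j, hj, rfl⟩; exact hj
    · intro ha; exact ⟨⟨a, lt_of_lt_of_le ha h⟩, ha, rfl⟩
  rw [this, Finset.card_range]

lemma det_first (n i : ℕ) (h1 : 1 ≤ i) (h2 : i ≤ n) (b : Fin n → LaurentSeries ℂ)
    (S : Finset (Fin n)) (hS : S = Finset.univ.filter (fun j : Fin n => (j : ℕ) < i)) :
    ((Mmat n b).submatrix (fun a : {x // x ∈ S} => a.1) (fun a : {x // x ∈ S} => a.1)).det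
      = (-1) ^ (i - 1) * b ⟨i - 1, lt_of_lt_of_le (Nat.sub_lt h1 one_pos) h2⟩ := by
  let e : Fin i ≃ {x // x ∈ S} :=
  { toFun := fun j => ⟨⟨j.1, lt_of_lt_of_le j.2 h2⟩, by simp [hS, j.2]⟩
    invFun := fun s => ⟨s.1.1, by
      obtain ⟨v, hv⟩ := s; rw [hS, Finset.mem_filter] at hv; exact hv.2⟩
    left_inv := fun j => by ext; rfl
    right_inv := fun s => by ext; rfl }
  have key : (((Mmat n b).submatrix (fun a : {x // x ∈ S} => a.1)
        (fun a : {x // x ∈ S} => a.1)).submatrix e e)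
      = (Mmat n b).submatrix (fun j : Fin i => (⟨j.1, lt_of_lt_of_le j.2 h2⟩ : Fin n))
          (fun j : Fin i => (⟨j.1, lt_of_lt_of_le j.2 h2⟩ : Fin n)) := by
    ext j k; rfl
  rw [← Matrix.det_submatrix_equiv_self e, key]
  obtain ⟨m, rfl⟩ : ∃ m, i = m + 1 := ⟨i - 1, (Nat.succ_pred_eq_of_pos h1).symm⟩
  rw [Matrix.det_succ_row _ (Fin.last m)]
  rw [Finset.sum_eq_single 0]
  · have hsub : ((Mmat n b).submatrix
        (fun j : Fin (m+1) => (⟨j.1, lt_of_lt_of_le j.2 h2⟩ : Fin n))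
        (fun j : Fin (m+1) => (⟨j.1, lt_of_lt_of_le j.2 h2⟩ : Fin n))).submatrix
        (Fin.last m).succAbove (Fin.succAbove 0)
        = (1 : Matrix (Fin m) (Fin m) (LaurentSeries ℂ)) := by
      ext p q : 2
      have hrow : (Fin.last m).succAbove p = Fin.castSucc p := Fin.succAbove_last_apply p
      simp only [Matrix.submatrix_apply, Fin.succAbove_zero, hrow, Mmat, Matrix.one_apply]
      have hq : ((Fin.succ q : Fin (m+1)) : ℕ) = q.1 + 1 := rfl
      have hp : ((Fin.castSucc p : Fin (m+1)) : ℕ) = p.1 := rfl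
      rw [if_neg (by simp [hq])]
      simp only [hq, hp]
      by_cases hpq : p = q
      · rw [if_pos (by omega), if_pos hpq]
      · rw [if_neg (by rw [Fin.ext_iff] at hpq; omega), if_neg hpq]
    rw [hsub, Matrix.det_one, mul_one]
    have : (Mmat n b) ⟨(Fin.last m).1, lt_of_lt_of_le (Fin.last m).2 h2⟩
        ⟨(0 : Fin (m+1)).1, lt_of_lt_of_le (0 : Fin (m+1)).2 h2⟩ = b ⟨m, by omega⟩ := by
      simp [Mmat, Fin.last]
    simp only [Matrix.submatrix_apply, this, Fin.val_last, Fin.val_zero, Nat.add_zero,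
      Nat.add_sub_cancel]
    rfl
  · intro j _ hj
    have : (Mmat n b) ⟨(Fin.last m).1, lt_of_lt_of_le (Fin.last m).2 h2⟩
        ⟨j.1, lt_of_lt_of_le j.2 h2⟩ = 0 := by
      simp only [Mmat, Fin.last]
      rw [if_neg (by intro h0; exact hj (Fin.ext h0)), if_neg (by omega)]
    simp only [Matrix.submatrix_apply]
    rw [this]
    ring
  · simp

lemma det_zero_of_ne (n i : ℕ) (b : Fin n → LaurentSeries ℂ) (S : Finset (Fin n))
    (hcard : S.card = i)
    (hne : S ≠ Finset.univ.filter (fun j : Fin n => (j : ℕ) < i)) :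
    ((Mmat n b).submatrix (fun a : {x // x ∈ S} => a.1) (fun a : {x // x ∈ S} => a.1)).det
      = 0 := by
  by_cases hex : ∃ k ∈ S, (k : ℕ) ≠ 0 ∧ ∀ j ∈ S, (k : ℕ) ≠ (j : ℕ) + 1
  · obtain ⟨k, hkS, hk0, hkcol⟩ := hex
    apply Matrix.det_eq_zero_of_column_eq_zero ⟨k, hkS⟩
    intro a
    simp only [Matrix.submatrix_apply, Mmat]
    rw [if_neg hk0, if_neg (hkcol a.1 a.2)]
  · exfalso
    apply hne
    push_neg at hex
    have closed : ∀ m : ℕ, ∀ k : Fin n, k ∈ S → (k : ℕ) = m →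
        ∀ l : Fin n, (l : ℕ) ≤ m → l ∈ S := by
      intro m
      induction m using Nat.strong_induction_on with
      | _ m ih =>
        intro k hk hkm l hl
        rcases Nat.eq_or_lt_of_le hl with heq | hlt
        · have : l = k := Fin.ext (by omega)
          rwa [this]
        · rcases Decidable.em ((k : ℕ) = 0) with h0 | h0
          · omega
          · obtain ⟨j, hj, hkj⟩ := hex k hk h0
            exact ih j.1 (by omega) j hj rfl l (by omega)
    have hsub : S ⊆ Finset.univ.filter (fun j : Fin n => (j : ℕ) < i) := by
      intro k hk
      simp only [Finset.mem_filter, Finset.mem_univ, true_and]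
      by_contra hki
      push_neg at hki
      have hIic : Finset.Iic k ⊆ S := by
        intro l hl
        exact closed k.1 k hk rfl l (by simpa using hl)
      have := Finset.card_le_card hIic
      rw [Fin.card_Iic] at this
      omega
    have hin : i ≤ n := by
      calc i = S.card := hcard.symm
        _ ≤ (Finset.univ : Finset (Fin n)).card := Finset.card_le_card (Finset.subset_univ S)
        _ = n := by simp
    exact Finset.eq_of_subset_of_card_le hsub (by rw [card_filter_lt n i hin, hcard])

lemma sum_minors (n i : ℕ) (h1 : 1 ≤ i) (h2 : i ≤ n) (b : Fin n → LaurentSeries ℂ) :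
    (∑ S ∈ Finset.univ.powerset.filter (fun S : Finset (Fin n) => S.card = i),
      ((Mmat n b).submatrix
          (fun a : {x // x ∈ S} => a.1) (fun a : {x // x ∈ S} => a.1)).det)
    = (-1) ^ (i - 1) * b ⟨i - 1, lt_of_lt_of_le (Nat.sub_lt h1 one_pos) h2⟩ := by
  rw [Finset.sum_eq_single (Finset.univ.filter (fun j : Fin n => (j : ℕ) < i))]
  · exact det_first n i h1 h2 b _ rfl
  · intro S hS hne
    simp only [Finset.mem_filter, Finset.mem_powerset] at hS
    exact det_zero_of_ne n i b S hS.2 hne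
  · intro h
    exfalso
    apply h
    simp only [Finset.mem_filter, Finset.mem_powerset]
    exact ⟨Finset.subset_univ _, card_filter_lt n i h2⟩

lemma sigma_eq (n : ℕ) (C : Matrix (Fin n) (Fin n) ℂ) (hC : IsUnit C)
    (b : Fin n → LaurentSeries ℂ) (i : ℕ) (h1 : 1 ≤ i) (h2 : i ≤ n) (r : ℤ) :
    sigmaFn n C i r ((C.map (algebraMap ℂ (LaurentSeries ℂ)))⁻¹ * Mmat n b)
      = ((-1) ^ (i - 1) *
          b ⟨i - 1, lt_of_lt_of_le (Nat.sub_lt h1 one_pos) h2⟩ : LaurentSeries ℂ).coeff r := by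
  have hdet : IsUnit (C.map (algebraMap ℂ (LaurentSeries ℂ))).det := by
    have h := ((Matrix.isUnit_iff_isUnit_det C).mp hC).map (algebraMap ℂ (LaurentSeries ℂ))
    rw [RingHom.map_det] at h
    simpa [RingHom.mapMatrix_apply] using h
  have hmul : C.map (algebraMap ℂ (LaurentSeries ℂ)) *
      ((C.map (algebraMap ℂ (LaurentSeries ℂ)))⁻¹ * Mmat n b) = Mmat n b :=
    Matrix.mul_nonsing_inv_cancel_left _ _ hdet
  unfold sigmaFn
  rw [hmul, sum_minors n i h1 h2 b]

/-- for a regular `C ∈ GL_n(ℂ)` (the centralizer of `C` in `Mat_n(ℂ)` has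
dimension `n`), the functions `σ_i(C)^{(r)}` on `Mat_n(ℂ((z^{-1})))`, indexed by pairs
`(i, r)` with `1 ≤ i ≤ n` and `r ∈ ℤ`, are algebraically independent over `ℂ`. -/
theorem statement1 (n : ℕ) (hn : 1 ≤ n) (C : Matrix (Fin n) (Fin n) ℂ)
    (hC : IsUnit C)
    (hreg : Module.finrank ℂ
      (Subalgebra.centralizer ℂ ({C} : Set (Matrix (Fin n) (Fin n) ℂ))) = n) :
    AlgebraicIndependent ℂ
      (fun p : {q : ℕ × ℤ // 1 ≤ q.1 ∧ q.1 ≤ n} =>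
        fun g : Matrix (Fin n) (Fin n) (LaurentSeries ℂ) => sigmaFn n C p.1.1 p.1.2 g) := by
  classical
  set ι := {q : ℕ × ℤ // 1 ≤ q.1 ∧ q.1 ≤ n} with hι
  set f : ι → (Matrix (Fin n) (Fin n) (LaurentSeries ℂ) → ℂ) :=
    (fun p : ι => fun g : Matrix (Fin n) (Fin n) (LaurentSeries ℂ) =>
      sigmaFn n C p.1.1 p.1.2 g) with hf
  rw [algebraicIndependent_iff]
  intro P hP
  apply MvPolynomial.funext (q := 0)
  intro x
  rw [map_zero]
  -- the realizing matrix
  let aFun : ℕ → LaurentSeries ℂ := fun i =>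
    ∑ p ∈ P.vars.filter (fun p : ι => p.1.1 = i), HahnSeries.single p.1.2 (x p)
  let b : Fin n → LaurentSeries ℂ := fun j => (-1) ^ (j : ℕ) * aFun (j.1 + 1)
  let g := (C.map (algebraMap ℂ (LaurentSeries ℂ)))⁻¹ * Mmat n b
  let c : ι → ℂ := fun p => if p ∈ P.vars then x p else 0
  have hsumcoeff : ∀ (t : Finset ι) (F : ι → LaurentSeries ℂ) (r : ℤ),
      (∑ p ∈ t, F p).coeff r = ∑ p ∈ t, (F p).coeff r :=
    fun t F r => map_sum (HahnSeries.coeff.addMonoidHom r) F t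
  have hval : ∀ p : ι, f p g = c p := by
    rintro ⟨⟨i, r⟩, hi1, hi2⟩
    show sigmaFn n C i r g = c ⟨(i, r), hi1, hi2⟩
    rw [sigma_eq n C hC b i hi1 hi2 r]
    have hb : ((-1 : LaurentSeries ℂ) ^ (i - 1) *
        b ⟨i - 1, lt_of_lt_of_le (Nat.sub_lt hi1 one_pos) hi2⟩ : LaurentSeries ℂ)
        = aFun i := by
      show (-1 : LaurentSeries ℂ) ^ (i - 1) * ((-1) ^ (i - 1) * aFun ((i - 1) + 1)) = aFun i
      have hone : (-1 : LaurentSeries ℂ) * -1 = 1 := by ring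
      rw [← mul_assoc, ← mul_pow, hone, one_pow, one_mul]
      congr 1
      omega
    rw [hb]
    show (∑ p ∈ P.vars.filter (fun p : ι => p.1.1 = i),
        HahnSeries.single p.1.2 (x p)).coeff r = c ⟨(i, r), hi1, hi2⟩
    rw [hsumcoeff]
    by_cases hmem : (⟨(i, r), hi1, hi2⟩ : ι) ∈ P.vars
    · rw [Finset.sum_eq_single (⟨(i, r), hi1, hi2⟩ : ι)]
      · simp only [c, if_pos hmem, HahnSeries.coeff_single_same]
      · rintro ⟨⟨i', r'⟩, h'⟩ hq hne
        simp only [Finset.mem_filter] at hq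
        apply HahnSeries.coeff_single_of_ne
        intro hrr'
        apply hne
        apply Subtype.ext
        exact Prod.ext hq.2 hrr'.symm
      · intro habs
        exfalso
        exact habs (Finset.mem_filter.mpr ⟨hmem, rfl⟩)
    · have hz : (∑ p ∈ P.vars.filter (fun p : ι => p.1.1 = i),
          (HahnSeries.single p.1.2 (x p)).coeff r) = 0 := by
        apply Finset.sum_eq_zero
        rintro ⟨⟨i', r'⟩, h'⟩ hq
        simp only [Finset.mem_filter] at hq
        apply HahnSeries.coeff_single_of_ne
        intro hrr'
        apply hmem
        have : (⟨(i', r'), h'⟩ : ι) = ⟨(i, r), hi1, hi2⟩ := Subtype.ext (Prod.ext hq.2 hrr'.symm)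
        rw [← this]
        exact hq.1
      rw [hz]
      simp only [c]
      rw [if_neg hmem]
  -- evaluate the polynomial relation at g
  have hg0 : MvPolynomial.eval c P = 0 := by
    have h1 : ((MvPolynomial.aeval f) P) g = 0 := by rw [hP]; rfl
    have h2 := AlgHom.congr_fun (MvPolynomial.comp_aeval (f := f)
      (Pi.evalAlgHom ℂ (fun _ : Matrix (Fin n) (Fin n) (LaurentSeries ℂ) => ℂ) g)) P
    have h3 : (MvPolynomial.aeval (fun p : ι => f p g)) P = 0 := by
      have h1' : ((Pi.evalAlgHom ℂ (fun _ : Matrix (Fin n) (Fin n) (LaurentSeries ℂ) => ℂ)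
          g).comp (MvPolynomial.aeval f)) P = 0 := h1
      rw [h2] at h1'
      exact h1'
    have h4 : (fun p : ι => f p g) = c := funext hval
    rw [h4] at h3
    have h5 : (MvPolynomial.aeval c) P = MvPolynomial.eval c P := by
      rw [← MvPolynomial.coe_aeval_eq_eval]; rfl
    rw [← h5]; exact h3
  -- replace c by x using that they agree on the variables of P
  have hcx : MvPolynomial.eval x P = MvPolynomial.eval c P := by
    apply MvPolynomial.hom_congr_vars
    · ext a; simp
    · intro i hi _
      simp only [MvPolynomial.eval_X, c, if_pos hi]
    · rfl
  rw [hcx, hg0]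
end
end

section
/- For every C ∈ GL_n(ℂ), every i ∈ {1,…,n} and every g ∈ W_μ: (a) σ_i(C)^{(r)}(g) = 0 for all r < ⟨ω_i^*,μ⟩; and (b) σ_i(C)^{(⟨ω_i^*,μ⟩)}(g) = Σ_{S ∈ M_i} det(C[S,S]), a value independent of g; in particular, for C the identity matrix this value is the positive integer |M_i|. -/
noncomputable section

/-- `GL_n[[z^{-1}]]_1`: matrices of power series in `z^{-1}` with constant term the
identity matrix. -/
def G1 (n : ℕ) : Set (Matrix (Fin n) (Fin n) (LaurentSeries ℂ)) :=
  {g | (∀ (i j : Fin n) (r : ℤ), r < 0 → (g i j).coeff r = 0) ∧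
       (∀ i j : Fin n, (g i j).coeff 0 = if i = j then 1 else 0)}

/-- `z^μ = diag(z^{d_1}, …, z^{d_n})`; in the variable `t = z^{-1}` the entry `z^{d_j}`
is `t^{-d_j}`. -/
def zmu (n : ℕ) (d : Fin n → ℤ) : Matrix (Fin n) (Fin n) (LaurentSeries ℂ) :=
  Matrix.diagonal fun j => HahnSeries.single (-(d j)) 1

/-- `W_μ = GL_n[[z^{-1}]]_1 · z^μ · GL_n[[z^{-1}]]_1`. -/
def Wmu (n : ℕ) (d : Fin n → ℤ) : Set (Matrix (Fin n) (Fin n) (LaurentSeries ℂ)) :=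
  {g | ∃ a ∈ G1 n, ∃ b ∈ G1 n, g = a * zmu n d * b}

/-- `d_{n-i+1} + … + d_n`, the sum of the top `i` values of the antidominant cocharacter. -/
def topSum (n : ℕ) (d : Fin n → ℤ) (i : ℕ) : ℤ :=
  ∑ j ∈ Finset.univ.filter (fun j : Fin n => n - i ≤ j.val), d j

/-- `⟨ω_i^*, μ⟩ = -(d_{n-i+1} + … + d_n)`. -/
def omegaMu (n : ℕ) (d : Fin n → ℤ) (i : ℕ) : ℤ := -(topSum n d i)

/-- `M_i`: the `i`-element subsets `S` of `{1,…,n}` with `∑_{j ∈ S} d_j` equal to the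
maximal value `d_{n-i+1} + … + d_n`. -/
def Mset (n : ℕ) (d : Fin n → ℤ) (i : ℕ) : Finset (Finset (Fin n)) :=
  Finset.univ.powerset.filter
    (fun S : Finset (Fin n) => S.card = i ∧ ∑ j ∈ S, d j = topSum n d i)


namespace St2
open Finset


/-- power series condition: no negative coefficients -/
def PNN (x : LaurentSeries ℂ) : Prop := ∀ r : ℤ, r < 0 → x.coeff r = 0

lemma coeff_sum {α : Type*} (s : Finset α) (f : α → LaurentSeries ℂ) (r : ℤ) :
    (∑ x ∈ s, f x).coeff r = ∑ x ∈ s, (f x).coeff r := by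
  classical
  induction s using Finset.induction with
  | empty => simp
  | insert _ _ h ih => simp [Finset.sum_insert h, HahnSeries.coeff_add, ih]

lemma PNN.sum {α : Type*} {s : Finset α} {f : α → LaurentSeries ℂ}
    (h : ∀ x ∈ s, PNN (f x)) : PNN (∑ x ∈ s, f x) := by
  intro r hr
  rw [coeff_sum]
  exact Finset.sum_eq_zero fun x hx => h x hx r hr

lemma mul_coeff_nonpos {x y : LaurentSeries ℂ} (hx : PNN x) (hy : PNN y) {r : ℤ} (hr : r ≤ 0) :
    (x * y).coeff r = if r = 0 then x.coeff 0 * y.coeff 0 else 0 := by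
  rw [HahnSeries.coeff_mul]
  have hsx : ∀ l ∈ x.support, (0:ℤ) ≤ l := by
    intro l hl; by_contra h; exact hl (hx l (by omega))
  have hsy : ∀ l ∈ y.support, (0:ℤ) ≤ l := by
    intro l hl; by_contra h; exact hl (hy l (by omega))
  rcases lt_or_eq_of_le hr with hlt | heq
  · rw [if_neg (by omega)]
    apply Finset.sum_eq_zero
    intro ij hij
    rw [Finset.mem_addAntidiagonal] at hij
    have h1 := hsx ij.1 hij.1
    have h2 := hsy ij.2 hij.2.1
    exact absurd hij.2.2 (by omega)
  · subst heq
    rw [if_pos rfl]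
    apply Finset.sum_eq_single ((0:ℤ), (0:ℤ))
    · intro ij hij hne
      rw [Finset.mem_addAntidiagonal] at hij
      have h1 := hsx ij.1 hij.1
      have h2 := hsy ij.2 hij.2.1
      exact absurd hij.2.2 (fun h => hne (Prod.ext (by omega) (by omega)))
    · intro h
      rw [Finset.mem_addAntidiagonal] at h
      simp only [HahnSeries.mem_support, add_zero, and_true, not_and_or, not_not, ne_eq] at h
      rcases h with h | h
      · exact mul_eq_zero.mpr (Or.inl h)
      · exact mul_eq_zero.mpr (Or.inr h)

lemma PNN.mul {x y : LaurentSeries ℂ} (hx : PNN x) (hy : PNN y) : PNN (x * y) := by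
  intro r hr
  rw [mul_coeff_nonpos hx hy (le_of_lt hr), if_neg (by omega)]

lemma coeff0_mul {x y : LaurentSeries ℂ} (hx : PNN x) (hy : PNN y) :
    (x * y).coeff 0 = x.coeff 0 * y.coeff 0 := by
  rw [mul_coeff_nonpos hx hy le_rfl, if_pos rfl]

lemma PNN.one : PNN (1 : LaurentSeries ℂ) := by
  intro r hr
  rw [HahnSeries.coeff_one, if_neg (by omega)]

lemma pnn_prod {α : Type*} (s : Finset α) (f : α → LaurentSeries ℂ)
    (h : ∀ x ∈ s, PNN (f x)) :
    PNN (s.prod f) ∧ (s.prod f).coeff 0 = s.prod (fun x => (f x).coeff 0) := by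
  classical
  induction s using Finset.induction with
  | empty => refine ⟨PNN.one, ?_⟩; simp [HahnSeries.coeff_one]
  | @insert a s ha ih =>
    have h1 : PNN (f a) := h a (mem_insert_self a s)
    obtain ⟨ih1, ih2⟩ := ih (fun x hx => h x (mem_insert_of_mem hx))
    rw [Finset.prod_insert ha, Finset.prod_insert ha]
    exact ⟨h1.mul ih1, by rw [coeff0_mul h1 ih1, ih2]⟩

lemma pnn_intCast (k : ℤ) :
    PNN ((k : LaurentSeries ℂ)) ∧ ((k : LaurentSeries ℂ)).coeff 0 = (k : ℂ) := by
  have h : ((k : LaurentSeries ℂ)) = HahnSeries.single (0:ℤ) ((k : ℂ)) := by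
    rw [← map_intCast (HahnSeries.C : ℂ →+* LaurentSeries ℂ) k, HahnSeries.C_apply]
  constructor
  · intro r hr; rw [h, HahnSeries.coeff_single, if_neg (by omega)]
  · rw [h, HahnSeries.coeff_single, if_pos rfl]

lemma pnn_det {ι : Type*} [Fintype ι] [DecidableEq ι] (M : Matrix ι ι (LaurentSeries ℂ))
    (h : ∀ p q, PNN (M p q)) :
    PNN M.det ∧ M.det.coeff 0 = (M.map (fun x => x.coeff 0)).det := by
  constructor
  · rw [Matrix.det_apply']
    apply PNN.sum
    intro σ _
    exact (pnn_intCast _).1.mul (pnn_prod _ _ (fun j _ => h _ _)).1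
  · rw [Matrix.det_apply', Matrix.det_apply', coeff_sum]
    apply Finset.sum_congr rfl
    intro σ _
    rw [coeff0_mul (pnn_intCast _).1 (pnn_prod _ _ (fun j _ => h _ _)).1,
      (pnn_intCast _).2, (pnn_prod _ _ (fun j _ => h _ _)).2]
    simp [Matrix.map_apply]



lemma det_AB_submatrix {R : Type*} [CommRing R] {m : ℕ} {ι : Type*} [Fintype ι] [DecidableEq ι]
    (A B : Matrix (Fin m) (Fin m) R) (e : ι → Fin m) :
    ((A * B).submatrix e e).det
      = ∑ f : ι → Fin m, (∏ j, B (f j) (e j)) * ((A.submatrix e f).det) := by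
  have h1 : (A * B).submatrix e e = (A.submatrix e id) * (B.submatrix id e) := by
    ext j k
    simp [Matrix.mul_apply]
  rw [h1, Matrix.det_apply']
  have h2 : ∀ σ : Equiv.Perm ι,
      ∏ j, ((A.submatrix e id) * (B.submatrix id e)) (σ j) j
        = ∑ f : ι → Fin m, ∏ j, (A (e (σ j)) (f j) * B (f j) (e j)) := by
    intro σ
    have h3 : ∀ j : ι, ((A.submatrix e id) * (B.submatrix id e)) (σ j) j
        = ∑ l : Fin m, A (e (σ j)) l * B l (e j) := by
      intro j; simp [Matrix.mul_apply]
    rw [Finset.prod_congr rfl (fun j _ => h3 j), Finset.prod_univ_sum, Fintype.piFinset_univ]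
  rw [Finset.sum_congr rfl (fun σ _ => by rw [h2 σ, Finset.mul_sum])]
  rw [Finset.sum_comm]
  apply Finset.sum_congr rfl
  intro f _
  rw [Matrix.det_apply', Finset.mul_sum]
  apply Finset.sum_congr rfl
  intro σ _
  rw [Finset.prod_mul_distrib]
  simp only [Matrix.submatrix_apply]
  ring

lemma strictMono_fin_add {i m : ℕ} {F : Fin i → Fin m} (hF : StrictMono F) :
    ∀ (k : ℕ) (j j' : Fin i), j.val + k = j'.val → (F j).val + k ≤ (F j').val := by
  intro k
  induction k with
  | zero =>
    intro j j' h
    have : j = j' := Fin.ext (by omega)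
    subst this; omega
  | succ k ih =>
    intro j j' h
    have hk : j.val + k < i := by omega
    have h1 := ih j ⟨j.val + k, hk⟩ rfl
    have h2 : F ⟨j.val + k, hk⟩ < F j' := hF (by simp [Fin.lt_def]; omega)
    rw [Fin.lt_def] at h2
    omega

lemma strictMono_fin_le {i m : ℕ} {F : Fin i → Fin m} (hF : StrictMono F) (j : Fin i) :
    (F j).val ≤ m - i + j.val := by
  have hpos : 0 < i := j.pos
  have h1 := strictMono_fin_add hF (i - 1 - j.val) j ⟨i - 1, by omega⟩ (by simp; omega)
  have h2 := (F ⟨i - 1, by omega⟩).isLt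
  have h3 := j.isLt
  omega

def eTop (n i : ℕ) (hi : i ≤ n) : Fin i → Fin n :=
  fun j => ⟨n - i + j.val, by omega⟩

lemma eTop_injective {n i : ℕ} (hi : i ≤ n) : Function.Injective (eTop n i hi) := by
  intro j k h
  simp only [eTop, Fin.mk.injEq] at h
  exact Fin.ext (by omega)

lemma eTop_image {n i : ℕ} (hi : i ≤ n) :
    Finset.image (eTop n i hi) Finset.univ
      = Finset.univ.filter (fun j : Fin n => n - i ≤ j.val) := by
  ext l
  simp only [Finset.mem_image, Finset.mem_filter, Finset.mem_univ, true_and]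
  have hl := l.isLt
  constructor
  · rintro ⟨j, rfl⟩
    simp only [eTop]
    omega
  · intro h
    exact ⟨⟨l.val - (n - i), by omega⟩, Fin.ext (by simp only [eTop]; omega)⟩

lemma topSum_eq {n i : ℕ} (d : Fin n → ℤ) (hi : i ≤ n) :
    topSum n d i = ∑ j : Fin i, d (eTop n i hi j) := by
  rw [topSum, ← eTop_image hi, Finset.sum_image (fun j _ k _ h => eTop_injective hi h)]

lemma sum_le_topSum {n i : ℕ} {d : Fin n → ℤ} (hd : Monotone d) (hi : i ≤ n)
    (T : Finset (Fin n)) (hT : T.card = i) :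
    ∑ l ∈ T, d l ≤ topSum n d i := by
  have heT : Finset.image (T.orderEmbOfFin hT) Finset.univ = T := by
    apply Finset.eq_of_subset_of_card_le
    · intro l hl
      simp only [Finset.mem_image] at hl
      obtain ⟨j, -, rfl⟩ := hl
      exact Finset.orderEmbOfFin_mem T hT j
    · rw [hT, Finset.card_image_of_injective _ (T.orderEmbOfFin hT).injective,
        Finset.card_univ, Fintype.card_fin]
  rw [← heT, Finset.sum_image (fun j _ k _ h => (T.orderEmbOfFin hT).injective h),
    topSum_eq d hi]
  apply Finset.sum_le_sum
  intro j _
  apply hd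
  rw [Fin.le_def]
  have := strictMono_fin_le (T.orderEmbOfFin hT).strictMono j
  simp only [eTop]
  omega

lemma prod_single_mul {α : Type*} (s : Finset α) (m : α → ℤ) (c : α → LaurentSeries ℂ) :
    ∏ j ∈ s, (HahnSeries.single (m j) 1 * c j)
      = HahnSeries.single (∑ j ∈ s, m j) 1 * ∏ j ∈ s, c j := by
  classical
  induction s using Finset.induction with
  | empty => simp
  | @insert a s ha ih =>
    rw [Finset.prod_insert ha, Finset.prod_insert ha, Finset.sum_insert ha, ih,
      mul_mul_mul_comm, HahnSeries.single_mul_single, one_mul]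


lemma pnn_alg (c : ℂ) : PNN ((algebraMap ℂ (LaurentSeries ℂ)) c) ∧
    ((algebraMap ℂ (LaurentSeries ℂ)) c).coeff 0 = c := by
  have h : (algebraMap ℂ (LaurentSeries ℂ)) c = HahnSeries.single (0:ℤ) c := by
    rw [HahnSeries.algebraMap_apply']
    simp [PowerSeries.algebraMap_apply, HahnSeries.ofPowerSeries_C, HahnSeries.C_apply]
  constructor
  · intro s hs; rw [h, HahnSeries.coeff_single, if_neg (by omega)]
  · rw [h, HahnSeries.coeff_single, if_pos rfl]

lemma keyS {n : ℕ} {d : Fin n → ℤ} (hd : Monotone d) (C : Matrix (Fin n) (Fin n) ℂ)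
    {a b : Matrix (Fin n) (Fin n) (LaurentSeries ℂ)} (ha : a ∈ G1 n) (hb : b ∈ G1 n)
    {i : ℕ} (hi2 : i ≤ n) (S : Finset (Fin n)) (hS : S.card = i)
    {r : ℤ} (hr : r ≤ omegaMu n d i) :
    ((C.map (algebraMap ℂ (LaurentSeries ℂ)) * (a * zmu n d * b)).submatrix
        (fun x : {x // x ∈ S} => x.1) (fun x : {x // x ∈ S} => x.1)).det.coeff r
    = if r = omegaMu n d i ∧ ∑ j ∈ S, d j = topSum n d i
      then (C.submatrix (fun x : {x // x ∈ S} => x.1) (fun x : {x // x ∈ S} => x.1)).det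
      else 0 := by
  classical
  have hr' : r ≤ -(topSum n d i) := hr
  set A := C.map (algebraMap ℂ (LaurentSeries ℂ)) * a with hAdef
  set e : {x // x ∈ S} → Fin n := fun x => x.1 with hedef
  have hApnn : ∀ p q, PNN (A p q) := by
    intro p q
    rw [hAdef, Matrix.mul_apply]
    apply PNN.sum
    intro l _
    exact PNN.mul (pnn_alg (C p l)).1 (fun s hs => ha.1 l q s hs)
  have hA0 : ∀ p q, (A p q).coeff 0 = C p q := by
    intro p q
    rw [hAdef, Matrix.mul_apply, coeff_sum]
    rw [Finset.sum_congr rfl (fun l _ => by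
      rw [show (C.map (algebraMap ℂ (LaurentSeries ℂ))) p l
            = algebraMap ℂ (LaurentSeries ℂ) (C p l) from rfl,
        coeff0_mul (pnn_alg (C p l)).1 (fun s hs => ha.1 l q s hs),
        (pnn_alg (C p l)).2, ha.2 l q])]
    simp
  have hfact : C.map (algebraMap ℂ (LaurentSeries ℂ)) * (a * zmu n d * b)
      = A * (zmu n d * b) := by
    rw [hAdef, mul_assoc a, ← mul_assoc]
  have hBentry : ∀ (p q : Fin n), (zmu n d * b) p q
      = HahnSeries.single (-(d p)) 1 * b p q := by
    intro p q
    rw [zmu, Matrix.diagonal_mul]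
  have hterm : ∀ f : {x // x ∈ S} → Fin n,
      (∏ j, (zmu n d * b) (f j) (e j)) * ((A.submatrix e f).det)
        = HahnSeries.single (-(∑ j, d (f j))) 1
            * ((∏ j, b (f j) (e j)) * ((A.submatrix e f).det)) := by
    intro f
    rw [Finset.prod_congr rfl (fun j _ => hBentry (f j) (e j)), prod_single_mul, mul_assoc]
    congr 2
    rw [← Finset.sum_neg_distrib]
  have hco : ∀ (D : ℤ) (P : LaurentSeries ℂ),
      (HahnSeries.single (-D) 1 * P).coeff r = P.coeff (r + D) := by
    intro D P
    have h1 : r = (r + D) + (-D) := by ring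
    conv_lhs => rw [h1]
    rw [HahnSeries.coeff_single_mul_add, one_mul]
  have hiota : Fintype.card {x // x ∈ S} = i := by
    rw [Fintype.card_coe, hS]
  have hzero : ∀ f : {x // x ∈ S} → Fin n, f ≠ e →
      ((∏ j, b (f j) (e j)) * ((A.submatrix e f).det)).coeff (r + ∑ j, d (f j)) = 0 := by
    intro f hf
    by_cases hinj : Function.Injective f
    · have hD : (∑ j, d (f j)) ≤ topSum n d i := by
        rw [← Finset.sum_image (fun j _ k _ h => hinj h)]
        apply sum_le_topSum hd hi2
        rw [Finset.card_image_of_injective _ hinj, Finset.card_univ, hiota]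
      have hp1 := pnn_prod Finset.univ (fun j => b (f j) (e j))
        (fun j _ => fun s hs => hb.1 (f j) (e j) s hs)
      have hp2 := pnn_det (A.submatrix e f) (fun p q => hApnn (e p) (f q))
      beta_reduce at hp1
      rcases lt_or_eq_of_le (show r + (∑ j, d (f j)) ≤ 0 by omega) with hlt | heq
      · exact (hp1.1.mul hp2.1) _ hlt
      · rw [heq, coeff0_mul hp1.1 hp2.1, hp1.2]
        obtain ⟨j, hj⟩ : ∃ j, f j ≠ e j := by
          by_contra h; push_neg at h; exact hf (funext h)
        rw [Finset.prod_eq_zero (Finset.mem_univ j)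
          (show (b (f j) (e j)).coeff 0 = 0 by rw [hb.2 (f j) (e j), if_neg hj]), zero_mul]
    · rw [Function.not_injective_iff] at hinj
      obtain ⟨j, j', hjj, hne⟩ := hinj
      have hdet : (A.submatrix e f).det = 0 := by
        apply Matrix.det_zero_of_column_eq hne
        intro k
        simp [Matrix.submatrix_apply, hjj]
      rw [hdet, mul_zero]
      simp
  have hDe : (∑ j : {x // x ∈ S}, d (e j)) = ∑ j ∈ S, d j := Finset.sum_coe_sort S d
  have hsum_le := sum_le_topSum hd hi2 S hS
  have hp1 := pnn_prod Finset.univ (fun j => b (e j) (e j))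
    (fun j _ => fun s hs => hb.1 (e j) (e j) s hs)
  have hp2 := pnn_det (A.submatrix e e) (fun p q => hApnn (e p) (e q))
  beta_reduce at hp1
  have hval : ((∏ j, b (e j) (e j)) * ((A.submatrix e e).det)).coeff (r + ∑ j, d (e j))
      = if r = omegaMu n d i ∧ (∑ j ∈ S, d j) = topSum n d i
        then (C.submatrix e e).det else 0 := by
    by_cases hcond : r = omegaMu n d i ∧ (∑ j ∈ S, d j) = topSum n d i
    · rw [if_pos hcond]
      have hr0 : r = -(topSum n d i) := hcond.1
      have h0 : r + (∑ j, d (e j)) = 0 := by rw [hDe, hcond.2, hr0]; ring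
      rw [h0, coeff0_mul hp1.1 hp2.1, hp1.2]
      rw [Finset.prod_congr rfl (fun (j : {x // x ∈ S}) _ =>
          show (b (e j) (e j)).coeff 0 = (1:ℂ) by rw [hb.2 (e j) (e j), if_pos rfl]),
        Finset.prod_const_one, one_mul, hp2.2]
      have hmat : (Matrix.map (A.submatrix e e) (fun x => x.coeff 0)) = C.submatrix e e := by
        ext p q
        simp only [Matrix.map_apply, Matrix.submatrix_apply]
        exact hA0 (e p) (e q)
      rw [hmat]
    · rw [if_neg hcond]
      have hlt : r + (∑ j, d (e j)) < 0 := by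
        rw [hDe]
        rcases not_and_or.mp hcond with h | h
        · have : r ≠ -(topSum n d i) := fun hh => h hh
          omega
        · omega
      exact (hp1.1.mul hp2.1) _ hlt
  rw [hfact, det_AB_submatrix, coeff_sum,
    Finset.sum_congr rfl (fun f _ => by rw [hterm f, hco]),
    Finset.sum_eq_single_of_mem e (Finset.mem_univ e) (fun f _ hf => hzero f hf), hval]

end St2

/-- for `C ∈ GL_n(ℂ)`, `1 ≤ i ≤ n` and `g ∈ W_μ`: (a) `σ_i(C)^{(r)}(g) = 0`
for `r < ⟨ω_i^*,μ⟩`; (b) `σ_i(C)^{(⟨ω_i^*,μ⟩)}(g) = ∑_{S ∈ M_i} det C[S,S]`, independent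
of `g`; and `M_i` is nonempty (so for `C = 1` this value is the positive integer `|M_i|`). -/
theorem statement2 (n : ℕ) (hn : 1 ≤ n) (d : Fin n → ℤ) (hd : Monotone d)
    (C : Matrix (Fin n) (Fin n) ℂ) (hC : IsUnit C)
    (i : ℕ) (hi1 : 1 ≤ i) (hi2 : i ≤ n)
    (g : Matrix (Fin n) (Fin n) (LaurentSeries ℂ)) (hg : g ∈ Wmu n d) :
    (∀ r : ℤ, r < omegaMu n d i → sigmaFn n C i r g = 0) ∧
    (sigmaFn n C i (omegaMu n d i) g =
      ∑ S ∈ Mset n d i,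
        (C.submatrix (fun a : {x // x ∈ S} => a.1) (fun a : {x // x ∈ S} => a.1)).det) ∧
    0 < (Mset n d i).card := by
  classical
  obtain ⟨a, ha, b, hb, rfl⟩ := hg
  refine ⟨?_, ?_, ?_⟩
  · intro r hrlt
    unfold sigmaFn
    rw [St2.coeff_sum]
    apply Finset.sum_eq_zero
    intro S hSmem
    rw [Finset.mem_filter] at hSmem
    rw [St2.keyS hd C ha hb hi2 S hSmem.2 (le_of_lt hrlt),
      if_neg (fun h => (ne_of_lt hrlt) h.1)]
  · unfold sigmaFn
    rw [St2.coeff_sum,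
      Finset.sum_congr rfl
        (fun S hSm => St2.keyS hd C ha hb hi2 S (Finset.mem_filter.mp hSm).2 le_rfl)]
    have hM : Mset n d i = (Finset.univ.powerset.filter
        (fun S : Finset (Fin n) => S.card = i)).filter
          (fun S => ∑ j ∈ S, d j = topSum n d i) := by
      rw [Mset, Finset.filter_filter]
    conv_rhs => rw [hM, Finset.sum_filter]
    apply Finset.sum_congr rfl
    intro S _
    simp
  · apply Finset.card_pos.mpr
    refine ⟨Finset.univ.filter (fun j : Fin n => n - i ≤ j.val), ?_⟩
    rw [Mset, Finset.mem_filter]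
    refine ⟨Finset.mem_powerset.mpr (Finset.subset_univ _), ?_, rfl⟩
    rw [← St2.eTop_image hi2, Finset.card_image_of_injective _ (St2.eTop_injective hi2),
      Finset.card_univ, Fintype.card_fin]
end
end

section
/- For every C ∈ L, every g ∈ L[[z^{−1}]]_1, every i ∈ {1,…,n} and every r ∈ ℤ, one has σ_i(C)^{(r)}(g·z^μ) = σ_{L,i}(C)^{(r−⟨ω_i^*,μ⟩)}(g) + Σ_{S ∉ M_i, |S| = i} [coefficient of z^{−(r+Σ_{j∈S}d_j)} in det((C·g)[S,S])], and moreover r + Σ_{j∈S}d_j < r − ⟨ω_i^*,μ⟩ for every i-element subset S ∉ M_i. In other words, the restriction of σ_i(C)^{(r)} along g ↦ g·z^μ equals σ_{L,i}(C)^{(r−⟨ω_i^*,μ⟩)} up to the listed correction terms, each of which extracts a Laurent coefficient of strictly smaller index (this is the key leading-term identity in the proof that gr B̄_μ(C) ≅ B̄_L(C)). -/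
noncomputable section

/-- The Levi subgroup `L = Z_{GL_n}(μ)`: invertible block-diagonal matrices. -/
def Lset (n : ℕ) (d : Fin n → ℤ) : Set (Matrix (Fin n) (Fin n) ℂ) :=
  {g | IsUnit g ∧ ∀ j k, d j ≠ d k → g j k = 0}

/-- `L[[z^{-1}]]_1`. -/
def L1 (n : ℕ) (d : Fin n → ℤ) : Set (Matrix (Fin n) (Fin n) (LaurentSeries ℂ)) :=
  {g | g ∈ G1 n ∧ ∀ j k, d j ≠ d k → g j k = 0}

/-- `σ_{L,i}(C)^{(r)}(g)`: the coefficient of `z^{-r}` in `∑_{S ∈ M_i} det((C·g)[S,S])`. -/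
def sigmaLev (n : ℕ) (d : Fin n → ℤ) (C : Matrix (Fin n) (Fin n) ℂ) (i : ℕ) (r : ℤ)
    (g : Matrix (Fin n) (Fin n) (LaurentSeries ℂ)) : ℂ :=
  (∑ S ∈ Mset n d i,
      ((C.map (algebraMap ℂ (LaurentSeries ℂ)) * g).submatrix
          (fun a : {x // x ∈ S} => a.1) (fun a : {x // x ∈ S} => a.1)).det).coeff r

lemma coeff_sum' {α : Type*} (s : Finset α) (f : α → LaurentSeries ℂ) (r : ℤ) :
    (∑ x ∈ s, f x).coeff r = ∑ x ∈ s, (f x).coeff r :=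
  map_sum (HahnSeries.coeff.addMonoidHom r) f s

lemma prod_single' {α : Type*} (s : Finset α) (e : α → ℤ) :
    ∏ j ∈ s, HahnSeries.single (e j) (1 : ℂ) = HahnSeries.single (∑ j ∈ s, e j) 1 := by
  induction s using Finset.cons_induction with
  | empty => simp [HahnSeries.single_zero_one]
  | cons a s ha ih =>
      rw [Finset.prod_cons, Finset.sum_cons, ih, HahnSeries.single_mul_single, one_mul]

lemma cardT (n i : ℕ) (hi2 : i ≤ n) :
    (Finset.univ.filter (fun j : Fin n => n - i ≤ j.val)).card = i := by
  apply Finset.card_eq_of_bijective (fun k hk => ⟨n - i + k, by omega⟩)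
  · intro a ha
    simp only [Finset.mem_filter, Finset.mem_univ, true_and] at ha
    exact ⟨a.val - (n - i), by omega, by ext; simp; omega⟩
  · intro k hk; simp only [Finset.mem_filter, Finset.mem_univ, true_and]; omega
  · intro k k' hk hk' h
    have h2 : n - i + k = n - i + k' := congrArg Fin.val h
    omega

lemma sum_le_topSum {n i : ℕ} (hi2 : i ≤ n) (d : Fin n → ℤ) (hd : Monotone d)
    (S : Finset (Fin n)) (hS : S.card = i) : ∑ j ∈ S, d j ≤ topSum n d i := by
  classical
  set T : Finset (Fin n) := Finset.univ.filter (fun j => n - i ≤ j.val) with hTdef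
  have hTcard : T.card = i := cardT n i hi2
  have hsd : ∑ j ∈ S \ T, d j ≤ ∑ j ∈ T \ S, d j := by
    have h1 := Finset.card_sdiff_add_card_inter S T
    have h2 := Finset.card_sdiff_add_card_inter T S
    rw [Finset.inter_comm] at h2
    have hcard : (S \ T).card = (T \ S).card := by omega
    rcases (T \ S).eq_empty_or_nonempty with he | hne
    · have : (S \ T) = ∅ := Finset.card_eq_zero.mp (by rw [hcard, he]; simp)
      simp [this, he]
    · set k0 := (T \ S).min' hne with hk0
      have hk0T : k0 ∈ T \ S := Finset.min'_mem _ _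
      have hk0v : n - i ≤ k0.val := by
        have := (Finset.mem_sdiff.mp hk0T).1
        rw [hTdef, Finset.mem_filter] at this
        exact this.2
      calc ∑ j ∈ S \ T, d j ≤ (S \ T).card • d k0 := by
            apply Finset.sum_le_card_nsmul
            intro j hj
            have hjT := (Finset.mem_sdiff.mp hj).2
            have hjv : j.val < n - i := by
              by_contra hc
              exact hjT (by rw [hTdef, Finset.mem_filter]; exact ⟨Finset.mem_univ _, by omega⟩)
            exact hd (Fin.le_def.mpr (by omega))
        _ = (T \ S).card • d k0 := by rw [hcard]
        _ ≤ ∑ k ∈ T \ S, d k :=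
            Finset.card_nsmul_le_sum _ _ _ (fun k hk => hd (Finset.min'_le _ _ hk))
  have e1 : ∑ j ∈ S ∩ T, d j + ∑ j ∈ S \ T, d j = ∑ j ∈ S, d j :=
    Finset.sum_inter_add_sum_sdiff S T d
  have e2 : ∑ j ∈ T ∩ S, d j + ∑ j ∈ T \ S, d j = ∑ j ∈ T, d j :=
    Finset.sum_inter_add_sum_sdiff T S d
  rw [Finset.inter_comm] at e2
  have e3 : topSum n d i = ∑ j ∈ T, d j := rfl
  omega

/-- the key leading-term identity: for `C ∈ L`, `g ∈ L[[z^{-1}]]_1`,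
`1 ≤ i ≤ n`, `r ∈ ℤ`, the restriction of `σ_i(C)^{(r)}` along `g ↦ g·z^μ` equals
`σ_{L,i}(C)^{(r - ⟨ω_i^*,μ⟩)}` plus correction terms indexed by the `i`-element subsets
`S ∉ M_i`, and each correction term extracts a Laurent coefficient of strictly smaller
index. -/
theorem statement3 (n : ℕ) (hn : 1 ≤ n) (d : Fin n → ℤ) (hd : Monotone d)
    (C : Matrix (Fin n) (Fin n) ℂ) (hC : C ∈ Lset n d)
    (g : Matrix (Fin n) (Fin n) (LaurentSeries ℂ)) (hg : g ∈ L1 n d)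
    (i : ℕ) (hi1 : 1 ≤ i) (hi2 : i ≤ n) (r : ℤ) :
    (sigmaFn n C i r (g * zmu n d) =
      sigmaLev n d C i (r - omegaMu n d i) g +
      ∑ S ∈ (Finset.univ.powerset.filter
          (fun S : Finset (Fin n) => S.card = i)) \ Mset n d i,
        (((C.map (algebraMap ℂ (LaurentSeries ℂ)) * g).submatrix
            (fun a : {x // x ∈ S} => a.1) (fun a : {x // x ∈ S} => a.1)).det).coeff
          (r + ∑ j ∈ S, d j)) ∧
    ∀ S : Finset (Fin n), S.card = i → S ∉ Mset n d i →
      r + ∑ j ∈ S, d j < r - omegaMu n d i := by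
  classical
  set C' := C.map (algebraMap ℂ (LaurentSeries ℂ)) with hC'
  have hnotmem : ∀ S : Finset (Fin n), S.card = i → S ∉ Mset n d i →
      ∑ j ∈ S, d j < topSum n d i := by
    intro S hcard hS
    have hle := sum_le_topSum hi2 d hd S hcard
    rcases lt_or_eq_of_le hle with h | h
    · exact h
    · exact absurd (Finset.mem_filter.mpr
        ⟨Finset.mem_powerset.mpr (Finset.subset_univ S), hcard, h⟩) hS
  constructor
  · have key : ∀ S : Finset (Fin n),
        (((C' * (g * zmu n d)).submatrix (fun a : {x // x ∈ S} => a.1)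
            (fun a : {x // x ∈ S} => a.1)).det).coeff r
        = (((C' * g).submatrix (fun a : {x // x ∈ S} => a.1)
            (fun a : {x // x ∈ S} => a.1)).det).coeff (r + ∑ j ∈ S, d j) := by
      intro S
      have hsub : (C' * (g * zmu n d)).submatrix (fun a : {x // x ∈ S} => a.1)
            (fun a : {x // x ∈ S} => a.1)
          = (C' * g).submatrix (fun a : {x // x ∈ S} => a.1) (fun a : {x // x ∈ S} => a.1)
            * Matrix.diagonal (fun a : {x // x ∈ S} => HahnSeries.single (-(d a.1)) (1 : ℂ)) := by
        ext a b
        rw [Matrix.mul_diagonal]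
        simp only [Matrix.submatrix_apply, ← mul_assoc, zmu, Matrix.mul_diagonal]
      rw [hsub, Matrix.det_mul, Matrix.det_diagonal]
      have hp : ∏ a : {x // x ∈ S}, HahnSeries.single (-(d a.1)) (1 : ℂ)
          = HahnSeries.single (-(∑ j ∈ S, d j)) 1 := by
        rw [Finset.univ_eq_attach, prod_single']
        have he : ∑ j ∈ S.attach, -(d j.1) = -(∑ j ∈ S, d j) := by
          rw [Finset.sum_attach S (fun j => -(d j)), ← Finset.sum_neg_distrib]
        rw [he]
      rw [hp]
      have hr : r = (r + ∑ j ∈ S, d j) + -(∑ j ∈ S, d j) := by ring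
      conv_lhs => rw [hr]
      rw [HahnSeries.coeff_mul_single_add, mul_one]
    have hstep1 : sigmaFn n C i r (g * zmu n d)
        = ∑ S ∈ Finset.univ.powerset.filter (fun S : Finset (Fin n) => S.card = i),
            (((C' * g).submatrix (fun a : {x // x ∈ S} => a.1)
              (fun a : {x // x ∈ S} => a.1)).det).coeff (r + ∑ j ∈ S, d j) := by
      rw [sigmaFn, coeff_sum']
      exact Finset.sum_congr rfl (fun S _ => key S)
    have hsubset : Mset n d i ⊆ Finset.univ.powerset.filter
        (fun S : Finset (Fin n) => S.card = i) := by
      intro S hS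
      rw [Mset, Finset.mem_filter] at hS
      exact Finset.mem_filter.mpr ⟨hS.1, hS.2.1⟩
    have hsplit := Finset.sum_sdiff (f := fun S : Finset (Fin n) =>
        (((C' * g).submatrix (fun a : {x // x ∈ S} => a.1)
          (fun a : {x // x ∈ S} => a.1)).det).coeff (r + ∑ j ∈ S, d j)) hsubset
    have hlev : ∑ S ∈ Mset n d i,
        (((C' * g).submatrix (fun a : {x // x ∈ S} => a.1)
          (fun a : {x // x ∈ S} => a.1)).det).coeff (r + ∑ j ∈ S, d j)
        = sigmaLev n d C i (r - omegaMu n d i) g := by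
      rw [sigmaLev, coeff_sum']
      apply Finset.sum_congr rfl
      intro S hS
      rw [Mset, Finset.mem_filter] at hS
      rw [hS.2.2]
      congr 1
      rw [omegaMu]; ring
    rw [hstep1, ← hsplit, hlev, add_comm]
  · intro S hcard hS
    have := hnotmem S hcard hS
    rw [omegaMu]
    omega
end
end
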